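/- Let k ≥ 1 be an integer and let S be a conical product rule of order k on the reference pyramid (built from two one-dimensional quadratures exact for polynomials of degree ≤ 2k+1 as in the stated hypotheses, with all points ζ_l ∈ [0,1)). Let ũ, ṽ be elements of the H¹-underlying space U^{(0)}_k = Q_k^{k,k,k−1} + span{z^k/(1+z)^k} (functions on K∞). Define f on K̂ ∖ {ζ=1} by f = (ũ·ṽ) ∘ φ⁻¹, where φ⁻¹(ξ,η,ζ) = (ξ/(1−ζ), η/(1−ζ), ζ/(1−ζ)). Then f is Lebesgue integrable on K̂ and S(f) = ∫_{K̂} f. -/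

import Mathlib

open MeasureTheory

noncomputable section

/-- The reference pyramid K̂ ⊂ ℝ³ (coordinates (ξ, η, ζ)). -/
def Khat : Set (ℝ × ℝ × ℝ) :=
  {p | 0 ≤ p.2.2 ∧ p.2.2 ≤ 1 ∧ 0 ≤ p.1 ∧ p.1 ≤ 1 - p.2.2 ∧ 0 ≤ p.2.1 ∧ p.2.1 ≤ 1 - p.2.2}

/-- The k-weighted tensor product polynomial space Q_k^{l,m,n}: the span of
(x,y,z) ↦ x^a y^b z^c / (1+z)^k for 0 ≤ a ≤ l, 0 ≤ b ≤ m, 0 ≤ c ≤ n. -/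
def Qspace (k : ℕ) (l m n : ℤ) : Submodule ℝ ((ℝ × ℝ × ℝ) → ℝ) :=
  Submodule.span ℝ {f | ∃ a b c : ℕ, (a : ℤ) ≤ l ∧ (b : ℤ) ≤ m ∧ (c : ℤ) ≤ n ∧
    f = fun p => p.1 ^ a * p.2.1 ^ b * p.2.2 ^ c / (1 + p.2.2) ^ k}

/-- The inverse of the projective map φ: (ξ,η,ζ) ↦ (ξ/(1−ζ), η/(1−ζ), ζ/(1−ζ)). -/
def phiInv (p : ℝ × ℝ × ℝ) : ℝ × ℝ × ℝ :=
  (p.1 / (1 - p.2.2), p.2.1 / (1 - p.2.2), p.2.2 / (1 - p.2.2))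

/-- The conical product quadrature rule on the reference pyramid. -/
def quadS {N M : ℕ} (xi lam : Fin N → ℝ) (ze mu : Fin M → ℝ) (f : ℝ × ℝ × ℝ → ℝ) : ℝ :=
  ∑ i, ∑ j, ∑ l, lam i * lam j * mu l * f (xi i * (1 - ze l), xi j * (1 - ze l), ze l)

/-!
Every element of `U_k^{(0)}` lies in `Q_k^{k,k,k}`, so `ũ ṽ` is a combination of the weighted
monomials `x^a y^b z^c / (1+z)^(2k)` with `a, b, c ≤ 2k`. Pulled back by `φ⁻¹` such a monomial
is `(ξ/(1-ζ))^a (η/(1-ζ))^b ζ^c (1-ζ)^(2k-c)`. It is bounded by `1` on `K̂`; integrating out `ξ`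
and `η` over `[0, 1-ζ]` leaves `(1-ζ)² ζ^c (1-ζ)^(2k-c) / ((a+1)(b+1))`; and at the node
`(ξ_i(1-ζ_l), ξ_j(1-ζ_l), ζ_l)` it equals `ξ_i^a ξ_j^b ζ_l^c (1-ζ_l)^(2k-c)`. Hence the conical
rule splits into the two one-dimensional rules applied to polynomials of degree `≤ 2k`, which
they integrate exactly. Exactness is linear in the integrand, and the values of `f` on the null
plane `ζ = 1`, which contains no node, do not matter.
-/

open Set

def weightedMonomial (k a b c : ℕ) : ℝ × ℝ × ℝ → ℝ :=
  fun p => p.1 ^ a * p.2.1 ^ b * p.2.2 ^ c / (1 + p.2.2) ^ k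

def Kinf : Set (ℝ × ℝ × ℝ) := Icc 0 1 ×ˢ Icc 0 1 ×ˢ Ici 0

lemma weightedMonomial_mul (k a b c k' a' b' c' : ℕ) :
    weightedMonomial k a b c * weightedMonomial k' a' b' c' =
      weightedMonomial (k + k') (a + a') (b + b') (c + c') := by
  funext p
  simp only [weightedMonomial, Pi.mul_apply, pow_add]
  ring

lemma weightedMonomial_mem_Qspace {k a b c : ℕ} {l m n : ℤ} (ha : (a : ℤ) ≤ l)
    (hb : (b : ℤ) ≤ m) (hc : (c : ℤ) ≤ n) : weightedMonomial k a b c ∈ Qspace k l m n :=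
  Submodule.subset_span ⟨a, b, c, ha, hb, hc, rfl⟩

lemma Qspace_mono {k : ℕ} {l m n l' m' n' : ℤ} (hl : l ≤ l') (hm : m ≤ m') (hn : n ≤ n') :
    Qspace k l m n ≤ Qspace k l' m' n' :=
  Submodule.span_mono fun _ ⟨a, b, c, ha, hb, hc, hf⟩ =>
    ⟨a, b, c, ha.trans hl, hb.trans hm, hc.trans hn, hf⟩

lemma Qspace_mul_le (k k' : ℕ) (l m n l' m' n' : ℤ) :
    Qspace k l m n * Qspace k' l' m' n' ≤ Qspace (k + k') (l + l') (m + m') (n + n') := by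
  rw [Qspace, Qspace, Submodule.span_mul_span, Submodule.span_le]
  rintro _ ⟨_, ⟨a, b, c, ha, hb, hc, rfl⟩, _, ⟨a', b', c', ha', hb', hc', rfl⟩, rfl⟩
  change weightedMonomial k a b c * weightedMonomial k' a' b' c' ∈ _
  rw [weightedMonomial_mul]
  exact weightedMonomial_mem_Qspace (by push_cast; omega) (by push_cast; omega)
    (by push_cast; omega)

lemma weightedMonomial_apply_div_one_sub {n c : ℕ} (a b : ℕ) (hc : c ≤ n) (x y : ℝ) {z : ℝ}
    (hz : z ≠ 1) :
    weightedMonomial n a b c (x, y, z / (1 - z)) =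
      x ^ a * y ^ b * (z ^ c * (1 - z) ^ (n - c)) := by
  obtain ⟨m, rfl⟩ := Nat.exists_eq_add_of_le hc
  have hz' : 1 - z ≠ 0 := sub_ne_zero.2 hz.symm
  have h1 : 1 + z / (1 - z) = (1 - z)⁻¹ := by field_simp; ring
  simp only [weightedMonomial, Nat.add_sub_cancel_left, h1, div_pow, inv_pow, pow_add]
  field_simp

lemma abs_weightedMonomial_le_one {n c : ℕ} (a b : ℕ) (hc : c ≤ n) {q : ℝ × ℝ × ℝ}
    (hq : q ∈ Kinf) :
    |weightedMonomial n a b c q| ≤ 1 := by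
  obtain ⟨x, y, t⟩ := q
  obtain ⟨⟨hx0, hx1⟩, ⟨hy0, hy1⟩, ht⟩ : (0 ≤ x ∧ x ≤ 1) ∧ (0 ≤ y ∧ y ≤ 1) ∧ 0 ≤ t := by
    simpa [Kinf] using hq
  have hpow : t ^ c ≤ (1 + t) ^ n := calc
    t ^ c ≤ (1 + t) ^ c := pow_le_pow_left₀ ht (by linarith) c
    _ ≤ (1 + t) ^ n := pow_le_pow_right₀ (by linarith) hc
  rw [weightedMonomial, mul_div_assoc, abs_of_nonneg (by positivity)]
  exact mul_le_one₀ (mul_le_one₀ (pow_le_one₀ hx0 hx1) (by positivity) (pow_le_one₀ hy0 hy1))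
    (by positivity) (div_le_one_of_le₀ hpow (by positivity))

-- At `ζ = 1` the junk value `phiInv p = (0, 0, 0)` lies in `K∞` as well.
lemma phiInv_mem_Kinf {p : ℝ × ℝ × ℝ} (hp : p ∈ Khat) : phiInv p ∈ Kinf := by
  obtain ⟨hz0, hz1, hx0, hx1, hy0, hy1⟩ := hp
  have ht : 0 ≤ 1 - p.2.2 := by linarith
  exact ⟨⟨div_nonneg hx0 ht, div_le_one_of_le₀ hx1 ht⟩,
    ⟨div_nonneg hy0 ht, div_le_one_of_le₀ hy1 ht⟩, div_nonneg hz0 ht⟩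

lemma phiInv_node (u v : ℝ) {z : ℝ} (hz : z ≠ 1) :
    phiInv (u * (1 - z), v * (1 - z), z) = (u, v, z / (1 - z)) := by
  have hz' : 1 - z ≠ 0 := sub_ne_zero.2 hz.symm
  simp [phiInv, hz']

lemma measurable_phiInv : Measurable phiInv := by
  unfold phiInv; fun_prop

lemma measurable_weightedMonomial (k a b c : ℕ) : Measurable (weightedMonomial k a b c) := by
  unfold weightedMonomial; fun_prop

lemma measurableSet_Khat : MeasurableSet Khat := by
  simp only [Khat, ofPred_and]
  measurability

lemma volume_Khat_ne_top : volume Khat ≠ ⊤ := by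
  refine ((measure_mono fun p hp => ?_).trans_lt
    (isCompact_Icc (a := (0 : ℝ × ℝ × ℝ)) (b := 1)).measure_lt_top).ne
  obtain ⟨hz0, hz1, hx0, hx1, hy0, hy1⟩ := hp
  exact ⟨⟨hx0, hy0, hz0⟩, ⟨by simp; linarith, by simp; linarith, hz1⟩⟩

lemma ae_snd_snd_ne (c : ℝ) : ∀ᵐ p : ℝ × ℝ × ℝ, p.2.2 ≠ c :=
  ((Measure.quasiMeasurePreserving_snd (μ := (volume : Measure ℝ)) (ν := volume)).comp
    (Measure.quasiMeasurePreserving_snd (μ := (volume : Measure ℝ)) (ν := volume))).ae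
    (Measure.ae_ne volume c)

lemma integral_indicator_section {α : Type*} {S : Set (ℝ × α)} {B : Set α} {u : α → ℝ}
    (hS : ∀ x q, (x, q) ∈ S ↔ q ∈ B ∧ x ∈ Icc 0 (u q)) (hu : ∀ q ∈ B, 0 ≤ u q)
    (F : ℝ × α → ℝ) (q : α) :
    ∫ x, S.indicator F (x, q) = B.indicator (fun q => ∫ x in 0..u q, F (x, q)) q := by
  by_cases hq : q ∈ B
  · have hsec : (fun x => S.indicator F (x, q)) = (Icc 0 (u q)).indicator fun x => F (x, q) := by
      funext x
      by_cases hx : x ∈ Icc 0 (u q)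
      · rw [indicator_of_mem hx, indicator_of_mem ((hS x q).2 ⟨hq, hx⟩)]
      · rw [indicator_of_notMem hx, indicator_of_notMem fun h => hx ((hS x q).1 h).2]
    rw [hsec, integral_indicator measurableSet_Icc, integral_Icc_eq_integral_Ioc,
      ← intervalIntegral.integral_of_le (hu q hq), indicator_of_mem hq]
  · have hsec : (fun x => S.indicator F (x, q)) = 0 := by
      funext x
      exact indicator_of_notMem (fun h => hq ((hS x q).1 h).1) _
    rw [hsec, indicator_of_notMem hq, Pi.zero_def, integral_zero]

lemma integral_Khat {F : ℝ × ℝ × ℝ → ℝ} (hF : IntegrableOn F Khat) :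
    ∫ p in Khat, F p = ∫ z in 0..1, ∫ y in 0..1 - z, ∫ x in 0..1 - z, F (x, y, z) := by
  set T : Set (ℝ × ℝ) := {q | 0 ≤ q.2 ∧ q.2 ≤ 1 ∧ 0 ≤ q.1 ∧ q.1 ≤ 1 - q.2}
  have hKhat : ∀ x q, (x, q) ∈ Khat ↔ q ∈ T ∧ x ∈ Icc 0 (1 - q.2) := by
    intro x q; simp only [Khat, T, mem_ofPred_eq, mem_Icc]; tauto
  have hT : ∀ y z, (y, z) ∈ T ↔ z ∈ Icc 0 1 ∧ y ∈ Icc 0 (1 - z) := by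
    intro y z; simp only [T, mem_ofPred_eq, mem_Icc]; tauto
  have hxsec := integral_indicator_section hKhat (fun q hq => by linarith [hq.2.1]) F
  have hysec := integral_indicator_section hT (fun z hz => by linarith [hz.2])
    fun q => ∫ x in 0..1 - q.2, F (x, q)
  have hFind : Integrable (Khat.indicator F) (volume.prod volume) :=
    (integrable_indicator_iff measurableSet_Khat).2 hF
  have hTind := hFind.integral_prod_right
  simp only [hxsec] at hTind
  rw [← integral_indicator measurableSet_Khat, Measure.volume_eq_prod, integral_prod_symm _ hFind]
  simp only [hxsec]
  rw [Measure.volume_eq_prod, integral_prod_symm _ hTind]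
  simp only [hysec]
  rw [integral_indicator measurableSet_Icc, integral_Icc_eq_integral_Ioc,
    ← intervalIntegral.integral_of_le zero_le_one]

lemma integrableOn_weightedMonomial_comp_phiInv {n c : ℕ} (a b : ℕ) (hc : c ≤ n) :
    IntegrableOn (weightedMonomial n a b c ∘ phiInv) Khat :=
  Measure.integrableOn_of_bounded (M := 1) volume_Khat_ne_top
    ((measurable_weightedMonomial n a b c).comp measurable_phiInv).aestronglyMeasurable
    ((ae_restrict_mem measurableSet_Khat).mono fun _ hp =>
      abs_weightedMonomial_le_one a b hc (phiInv_mem_Kinf hp))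

lemma integral_div_pow (t : ℝ) (a : ℕ) : ∫ x in 0..t, (x / t) ^ a = t / (a + 1) := by
  rcases eq_or_ne t 0 with rfl | ht
  · simp
  simp only [div_pow, intervalIntegral.integral_div, integral_pow]
  field_simp
  ring

lemma integral_weightedMonomial_comp_phiInv {n c : ℕ} (a b : ℕ) (hc : c ≤ n) :
    ∫ p in Khat, weightedMonomial n a b c (phiInv p) =
      1 / (a + 1) * (1 / (b + 1)) * ∫ z in 0..1, (1 - z) ^ 2 * (z ^ c * (1 - z) ^ (n - c)) := by
  rw [integral_Khat (F := fun p => weightedMonomial n a b c (phiInv p))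
      (integrableOn_weightedMonomial_comp_phiInv a b hc),
    ← intervalIntegral.integral_const_mul]
  congr 1
  funext z
  rcases eq_or_ne z 1 with rfl | hz
  · simp
  simp only [phiInv, weightedMonomial_apply_div_one_sub a b hc _ _ hz, mul_assoc,
    intervalIntegral.integral_mul_const, integral_div_pow, intervalIntegral.integral_const_mul]
  ring

section ConicalRule

variable {N M : ℕ} (xi lam : Fin N → ℝ) (ze mu : Fin M → ℝ)

lemma quadS_add (f g : ℝ × ℝ × ℝ → ℝ) :
    quadS xi lam ze mu (f + g) = quadS xi lam ze mu f + quadS xi lam ze mu g := by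
  simp only [quadS, Pi.add_apply, mul_add, Finset.sum_add_distrib]

lemma quadS_smul (r : ℝ) (f : ℝ × ℝ × ℝ → ℝ) :
    quadS xi lam ze mu (r • f) = r * quadS xi lam ze mu f := by
  simp only [quadS, Pi.smul_apply, smul_eq_mul, Finset.mul_sum]
  congr! 3 with i _ j _ l _
  ring

variable {xi lam ze mu} in
lemma quadS_congr (hze : ∀ l, ze l ≠ 1) {f g : ℝ × ℝ × ℝ → ℝ}
    (hfg : ∀ p : ℝ × ℝ × ℝ, p.2.2 ≠ 1 → f p = g p) :
    quadS xi lam ze mu f = quadS xi lam ze mu g := by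
  unfold quadS
  congr! 4 with i _ j _ l _
  exact hfg _ (hze l)

def ConicalRuleExact (f : ℝ × ℝ × ℝ → ℝ) : Prop :=
  IntegrableOn f Khat ∧ quadS xi lam ze mu f = ∫ p in Khat, f p

variable {xi lam ze mu} in
lemma ConicalRuleExact.congr (hze : ∀ l, ze l ≠ 1) {f g : ℝ × ℝ × ℝ → ℝ}
    (hg : ConicalRuleExact xi lam ze mu g) (hfg : ∀ p : ℝ × ℝ × ℝ, p.2.2 ≠ 1 → f p = g p) :
    ConicalRuleExact xi lam ze mu f := by
  have hae : f =ᵐ[volume.restrict Khat] g := ae_restrict_of_ae ((ae_snd_snd_ne 1).mono hfg)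
  exact ⟨hg.1.congr hae.symm, by rw [quadS_congr hze hfg, hg.2, integral_congr_ae hae]⟩

def conicalExactSpace : Submodule ℝ (ℝ × ℝ × ℝ → ℝ) where
  carrier := {g | ConicalRuleExact xi lam ze mu (g ∘ phiInv)}
  zero_mem' := ⟨integrableOn_zero, by simp [quadS]⟩
  add_mem' {f g} hf hg := ⟨hf.1.add hg.1, by
    rw [Pi.add_comp, quadS_add, hf.2, hg.2]; exact (integral_add hf.1 hg.1).symm⟩
  smul_mem' r f hf := ⟨hf.1.smul r, by
    rw [Pi.smul_comp, quadS_smul, hf.2]; exact (integral_const_mul r _).symm⟩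

variable {xi lam ze mu} {d : ℕ}

lemma sum_mul_pow_of_exact
    (hxi : ∀ g : Polynomial ℝ, g.natDegree ≤ d →
      ∑ i, lam i * g.eval (xi i) = ∫ x in (0:ℝ)..1, g.eval x) {a : ℕ} (ha : a ≤ d) :
    ∑ i, lam i * xi i ^ a = 1 / (a + 1) := by
  have h := hxi (Polynomial.X ^ a) (by rwa [Polynomial.natDegree_X_pow])
  simp only [Polynomial.eval_pow, Polynomial.eval_X] at h
  rw [h, integral_pow]
  simp

lemma sum_mul_pow_mul_one_sub_pow_of_exact
    (hmu : ∀ h : Polynomial ℝ, h.natDegree ≤ d →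
      ∑ l, mu l * h.eval (ze l) = ∫ z in (0:ℝ)..1, (1 - z) ^ 2 * h.eval z)
    {n c : ℕ} (hn : n ≤ d) (hc : c ≤ n) :
    ∑ l, mu l * (ze l ^ c * (1 - ze l) ^ (n - c)) =
      ∫ z in 0..1, (1 - z) ^ 2 * (z ^ c * (1 - z) ^ (n - c)) := by
  have hdeg :
      (Polynomial.X ^ c * (1 - Polynomial.X) ^ (n - c) : Polynomial ℝ).natDegree ≤ d := by
    compute_degree
    omega
  simpa using hmu _ hdeg

lemma quadS_weightedMonomial_comp_phiInv (hze : ∀ l, ze l ≠ 1) {n c : ℕ} (a b : ℕ)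
    (hc : c ≤ n) :
    quadS xi lam ze mu (weightedMonomial n a b c ∘ phiInv) =
      (∑ i, lam i * xi i ^ a) * (∑ j, lam j * xi j ^ b) *
        ∑ l, mu l * (ze l ^ c * (1 - ze l) ^ (n - c)) := by
  simp only [quadS, Function.comp_apply, phiInv_node _ _ (hze _),
    weightedMonomial_apply_div_one_sub a b hc _ _ (hze _)]
  rw [Finset.sum_mul_sum]
  simp only [Finset.sum_mul]
  simp only [Finset.mul_sum]
  congr! 3 with i _ j _ l _
  ring

lemma weightedMonomial_mem_conicalExactSpace (hze : ∀ l, ze l ≠ 1)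
    (hxi : ∀ g : Polynomial ℝ, g.natDegree ≤ d →
      ∑ i, lam i * g.eval (xi i) = ∫ x in (0:ℝ)..1, g.eval x)
    (hmu : ∀ h : Polynomial ℝ, h.natDegree ≤ d →
      ∑ l, mu l * h.eval (ze l) = ∫ z in (0:ℝ)..1, (1 - z) ^ 2 * h.eval z)
    {n a b c : ℕ} (ha : a ≤ d) (hb : b ≤ d) (hn : n ≤ d) (hc : c ≤ n) :
    weightedMonomial n a b c ∈ conicalExactSpace xi lam ze mu := by
  refine ⟨integrableOn_weightedMonomial_comp_phiInv a b hc, ?_⟩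
  rw [quadS_weightedMonomial_comp_phiInv hze a b hc, sum_mul_pow_of_exact hxi ha,
    sum_mul_pow_of_exact hxi hb, sum_mul_pow_mul_one_sub_pow_of_exact hmu hn hc]
  exact (integral_weightedMonomial_comp_phiInv a b hc).symm

lemma Qspace_le_conicalExactSpace (hze : ∀ l, ze l ≠ 1)
    (hxi : ∀ g : Polynomial ℝ, g.natDegree ≤ d →
      ∑ i, lam i * g.eval (xi i) = ∫ x in (0:ℝ)..1, g.eval x)
    (hmu : ∀ h : Polynomial ℝ, h.natDegree ≤ d →
      ∑ l, mu l * h.eval (ze l) = ∫ z in (0:ℝ)..1, (1 - z) ^ 2 * h.eval z)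
    {k : ℕ} {l m n : ℤ} (hl : l ≤ d) (hm : m ≤ d) (hn : n ≤ k) (hk : k ≤ d) :
    Qspace k l m n ≤ conicalExactSpace xi lam ze mu := by
  rw [Qspace, Submodule.span_le]
  rintro _ ⟨a, b, c, ha, hb, hc, rfl⟩
  exact weightedMonomial_mem_conicalExactSpace hze hxi hmu (by omega) (by omega) hk (by omega)

end ConicalRule

theorem stmt_3_general (k : ℕ) {N M : ℕ} (xi lam : Fin N → ℝ) (ze mu : Fin M → ℝ)
    (hze : ∀ l, ze l ∈ Set.Ico (0 : ℝ) 1)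
    (hxi : ∀ g : Polynomial ℝ, g.natDegree ≤ 2 * k + 1 →
      ∑ i, lam i * g.eval (xi i) = ∫ x in (0:ℝ)..1, g.eval x)
    (hmu : ∀ h : Polynomial ℝ, h.natDegree ≤ 2 * k + 1 →
      ∑ l, mu l * h.eval (ze l) = ∫ z in (0:ℝ)..1, (1 - z) ^ 2 * h.eval z)
    (ut vt : (ℝ × ℝ × ℝ) → ℝ)
    (hut : ut ∈ Qspace k k k ((k : ℤ) - 1) ⊔
      Submodule.span ℝ {(fun p : ℝ × ℝ × ℝ => p.2.2 ^ k / (1 + p.2.2) ^ k)})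
    (hvt : vt ∈ Qspace k k k ((k : ℤ) - 1) ⊔
      Submodule.span ℝ {(fun p : ℝ × ℝ × ℝ => p.2.2 ^ k / (1 + p.2.2) ^ k)})
    (f : (ℝ × ℝ × ℝ) → ℝ)
    (hf : ∀ p : ℝ × ℝ × ℝ, p.2.2 ≠ 1 → f p = ut (phiInv p) * vt (phiInv p)) :
    IntegrableOn f Khat volume ∧ quadS xi lam ze mu f = ∫ p in Khat, f p := by
  have hze_ne : ∀ l, ze l ≠ 1 := fun l => (hze l).2.ne
  have hU : Qspace k k k ((k : ℤ) - 1) ⊔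
      Submodule.span ℝ {(fun p : ℝ × ℝ × ℝ => p.2.2 ^ k / (1 + p.2.2) ^ k)} ≤ Qspace k k k k := by
    have hzk :
        (fun p : ℝ × ℝ × ℝ => p.2.2 ^ k / (1 + p.2.2) ^ k) = weightedMonomial k 0 0 k := by
      funext p
      simp [weightedMonomial]
    rw [hzk]
    exact sup_le (Qspace_mono le_rfl le_rfl (by omega))
      ((Submodule.span_singleton_le_iff_mem _ _).2
        (weightedMonomial_mem_Qspace (by omega) (by omega) le_rfl))
  have huv : ut * vt ∈ Qspace (k + k) (k + k) (k + k) (k + k) :=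
    Qspace_mul_le _ _ _ _ _ _ _ _ (Submodule.mul_mem_mul (hU hut) (hU hvt))
  exact ConicalRuleExact.congr hze_ne
    (Qspace_le_conicalExactSpace hze_ne hxi hmu (by omega) (by omega) (by push_cast; omega)
      (by omega) huv) hf

/-- for ũ, ṽ in the H¹-underlying space
U^{(0)}_k = Q_k^{k,k,k−1} + span{z^k/(1+z)^k}, the function f = (ũ·ṽ) ∘ φ⁻¹ is
integrable on K̂ and the conical product rule of order k ≥ 1 is exact for it. -/
theorem stmt_3 (k : ℕ) (hk : 1 ≤ k) {N M : ℕ} (xi lam : Fin N → ℝ) (ze mu : Fin M → ℝ)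
    (hze : ∀ l, ze l ∈ Set.Ico (0 : ℝ) 1)
    (hxi : ∀ g : Polynomial ℝ, g.natDegree ≤ 2 * k + 1 →
      ∑ i, lam i * g.eval (xi i) = ∫ x in (0:ℝ)..1, g.eval x)
    (hmu : ∀ h : Polynomial ℝ, h.natDegree ≤ 2 * k + 1 →
      ∑ l, mu l * h.eval (ze l) = ∫ z in (0:ℝ)..1, (1 - z) ^ 2 * h.eval z)
    (ut vt : (ℝ × ℝ × ℝ) → ℝ)
    (hut : ut ∈ Qspace k k k ((k : ℤ) - 1) ⊔
      Submodule.span ℝ {(fun p : ℝ × ℝ × ℝ => p.2.2 ^ k / (1 + p.2.2) ^ k)})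
    (hvt : vt ∈ Qspace k k k ((k : ℤ) - 1) ⊔
      Submodule.span ℝ {(fun p : ℝ × ℝ × ℝ => p.2.2 ^ k / (1 + p.2.2) ^ k)})
    (f : (ℝ × ℝ × ℝ) → ℝ)
    (hf : ∀ p : ℝ × ℝ × ℝ, p.2.2 ≠ 1 → f p = ut (phiInv p) * vt (phiInv p)) :
    IntegrableOn f Khat volume ∧ quadS xi lam ze mu f = ∫ p in Khat, f p :=
  stmt_3_general k xi lam ze mu hze hxi hmu ut vt hut hvt f hf
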